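/- If X is a finitely generated virtually abelian group and Y is a group with property (LR), then X × Y has property (LR). -/

import Mathlib

/-- `H` is a virtual retract of `G` if there is a finite-index subgroup `K` of `G`
containing `H` together with a homomorphism `K → H` restricting to the identity on `H`. -/
def IsVirtualRetract {G : Type*} [Group G] (H : Subgroup G) : Prop :=
  ∃ K : Subgroup G, K.FiniteIndex ∧ H ≤ K ∧
    ∃ ρ : K →* G, (∀ k : K, ρ k ∈ H) ∧ ∀ k : K, (k : G) ∈ H → ρ k = k

/-- A group has property (LR) if every finitely generated subgroup is a virtual retract. -/
def HasLR (G : Type*) [Group G] : Prop :=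
  ∀ H : Subgroup G, H.FG → IsVirtualRetract H

/-!
Write `P` and `Q` for the projections of a finitely generated `H ≤ X × Y`, and `N` for the
subgroup of `x` with `(x, 1) ∈ H`. As `Q` is finitely generated, it is a virtual retract of `Y`,
hence `X × Q` is one of `X × Y`, and it suffices to retract a subgroup of finite index in `X × Q`
onto `H`. For this we find `C ≤ X` normalised by `P` with `C ∩ N = 1` and `C N` of finite index:
then `H` normalises `C × 1`, meets it trivially, and `(C × 1) H` retracts onto `H` with kernel
`C × 1`.

To find `C`, pass to a normal torsion-free abelian subgroup `T ≅ ℤⁿ` of finite index in `X`, on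
which `P` acts through a finite group `Γ`. Smith normal form gives `τ : T → T ∩ N` that is
multiplication by `d ≠ 0` on `T ∩ N`; averaging `τ` over `Γ` makes it `Γ`-equivariant, and its
kernel is the required `C`. This is Maschke's theorem with the denominators cleared.
-/

theorem Submodule.exists_smul_retraction {R M : Type*} [CommRing R] [IsDomain R]
    [IsPrincipalIdealRing R] [AddCommGroup M] [Module R M] [Module.Finite R M] [Module.Free R M]
    (B : Submodule R M) :
    ∃ d : R, d ≠ 0 ∧ ∃ τ : M →ₗ[R] M, (∀ x, τ x ∈ B) ∧ ∀ b ∈ B, τ b = d • b := by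
  classical
  obtain ⟨n, s⟩ := B.smithNormalForm (Module.Free.chooseBasis R M)
  have ha : ∀ i, s.a i ≠ 0 := fun i hi ↦ s.bN.ne_zero i <| Subtype.ext <| by simp [s.snf, hi]
  let e : Fin n → R := fun i ↦ ∏ j ∈ Finset.univ.erase i, s.a j
  let τ : M →ₗ[R] M := ∑ i, (s.bM.coord (s.f i)).smulRight (e i • (s.bN i : M))
  refine ⟨∏ i, s.a i, Finset.prod_ne_zero_iff.mpr fun i _ ↦ ha i, τ, fun x ↦ ?_, fun b hb ↦ ?_⟩
  · simpa [τ] using B.sum_mem fun i _ ↦ B.smul_mem _ (B.smul_mem _ (s.bN i).2)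
  · have hτ : τ ∘ₗ B.subtype = (∏ i, s.a i) • B.subtype := s.bN.ext fun k ↦ by
      simp [τ, s.snf, Module.Basis.coord_apply, Finsupp.single_apply, s.f.injective.eq_iff,
        smul_smul, e, ← Finset.prod_erase_mul _ _ (Finset.mem_univ k), mul_comm]
    exact LinearMap.congr_fun hτ ⟨b, hb⟩

namespace Subgroup

variable {M : Type*} [CommGroup M]

theorem exists_pow_retraction [Group.FG M] [IsMulTorsionFree M] (B : Subgroup M) :
    ∃ d : ℕ, d ≠ 0 ∧ ∃ τ : M →* M, (∀ x, τ x ∈ B) ∧ ∀ b ∈ B, τ b = b ^ d := by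
  have : Module.Finite ℤ (Additive M) :=
    Module.Finite.iff_addGroup_fg.mpr (GroupFG.iff_add_fg.mp inferInstance)
  obtain ⟨d, hd, τ, hτB, hτ⟩ :=
    Submodule.exists_smul_retraction (AddSubgroup.toIntSubmodule B.toAddSubgroup)
  refine ⟨d.natAbs, Int.natAbs_ne_zero.mpr hd,
    MonoidHom.toAdditive.symm (d.sign • τ).toAddMonoidHom,
    fun x ↦ Submodule.smul_mem _ _ (hτB (Additive.ofMul x)), fun b hb ↦ ?_⟩
  change Additive.toMul (d.sign • τ (Additive.ofMul b)) = b ^ d.natAbs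
  rw [hτ (Additive.ofMul b) hb, smul_smul, Int.sign_mul_self, natCast_zsmul]
  rfl

theorem exists_equivariant_pow_retraction (Γ : Subgroup (MulAut M)) [Finite Γ]
    {B : Subgroup M} (hB : ∀ γ ∈ Γ, ∀ b ∈ B, γ b ∈ B) {d : ℕ} (τ : M →* M)
    (hτB : ∀ x, τ x ∈ B) (hτ : ∀ b ∈ B, τ b = b ^ d) :
    ∃ σ : M →* M, (∀ x, σ x ∈ B) ∧ (∀ b ∈ B, σ b = b ^ (d * Nat.card Γ)) ∧
      ∀ γ ∈ Γ, ∀ x, σ (γ x) = γ (σ x) := by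
  have := Fintype.ofFinite Γ
  let σ : M →* M := ∏ γ : Γ, (γ⁻¹ : MulAut M).toMonoidHom.comp (τ.comp (γ : MulAut M).toMonoidHom)
  have hσ : ∀ x, σ x = ∏ γ : Γ, (γ : MulAut M)⁻¹ (τ ((γ : MulAut M) x)) := fun x ↦ by
    simp [σ]
  refine ⟨σ, fun x ↦ ?_, fun b hb ↦ ?_, fun γ hγ x ↦ ?_⟩
  · rw [hσ]
    exact B.prod_mem fun γ _ ↦ hB _ (Γ.inv_mem γ.2) _ (hτB _)
  · simp [hσ, hτ _ (hB _ (Subtype.prop _) _ hb), pow_mul, Nat.card_eq_fintype_card]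
  · rw [hσ, hσ, map_prod]
    exact Fintype.prod_equiv (Equiv.mulRight ⟨γ, hγ⟩) _ _ fun g ↦ by simp [MulAut.mul_apply]

theorem disjoint_ker_and_finiteIndex_sup [Group.FG M] [IsMulTorsionFree M] {B : Subgroup M}
    {d : ℕ} (hd : d ≠ 0) (σ : M →* M) (hσB : ∀ x, σ x ∈ B) (hσ : ∀ b ∈ B, σ b = b ^ d) :
    Disjoint σ.ker B ∧ (σ.ker ⊔ B).FiniteIndex := by
  refine ⟨disjoint_def.mpr fun {x} hx hxB ↦ ?_, ?_⟩
  · rwa [MonoidHom.mem_ker, hσ x hxB, pow_eq_one_iff_left hd] at hx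
  · have := finiteIndex_range_powMonoidHom_of_fg M hd
    refine finiteIndex_of_le (H := (powMonoidHom d).range) ?_
    rintro _ ⟨x, rfl⟩
    have hker : x ^ d * (σ x)⁻¹ ∈ σ.ker := by
      rw [MonoidHom.mem_ker, map_mul, map_inv, map_pow, hσ _ (hσB x), mul_inv_cancel]
    simpa using mul_mem_sup hker (hσB x)

theorem exists_invariant_complement [Group.FG M] [IsMulTorsionFree M]
    (Γ : Subgroup (MulAut M)) [Finite Γ] (B : Subgroup M) (hB : ∀ γ ∈ Γ, ∀ b ∈ B, γ b ∈ B) :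
    ∃ C : Subgroup M, (∀ γ ∈ Γ, ∀ c ∈ C, γ c ∈ C) ∧ Disjoint C B ∧ (C ⊔ B).FiniteIndex := by
  obtain ⟨d, hd, τ, hτB, hτ⟩ := B.exists_pow_retraction
  obtain ⟨σ, hσB, hσ, hσΓ⟩ := exists_equivariant_pow_retraction Γ hB τ hτB hτ
  refine ⟨σ.ker, fun γ hγ c hc ↦ ?_,
    disjoint_ker_and_finiteIndex_sup (mul_ne_zero hd Nat.card_pos.ne') σ hσB hσ⟩
  rw [MonoidHom.mem_ker] at hc ⊢
  rw [hσΓ γ hγ, hc, map_one]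

end Subgroup

theorem CommGroup.finite_torsion_of_fg (G : Type*) [CommGroup G] [Group.FG G] :
    Finite (CommGroup.torsion G) := by
  have : Module.Finite ℤ (Additive G) :=
    Module.Finite.iff_addGroup_fg.mpr (GroupFG.iff_add_fg.mp inferInstance)
  have : Group.FG (torsion G) := by
    rw [Group.fg_iff_subgroup_fg, Subgroup.fg_iff_add_fg,
      ← AddSubgroup.toIntSubmodule_toAddSubgroup (torsion G).toAddSubgroup,
      ← Submodule.fg_iff_addSubgroup_fg]
    exact IsNoetherian.noetherian _
  exact finite_of_fg_isMulTorsion _ fun x ↦ Submonoid.isOfFinOrder_coe.mp x.2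

namespace Subgroup

variable {X : Type*} [Group X]

open scoped IsMulCommutative in
theorem exists_normal_torsionFree_of_isMulCommutative [Group.FG X] (A : Subgroup X)
    [A.FiniteIndex] [IsMulCommutative A] :
    ∃ N : Subgroup X, N.Normal ∧ N.FiniteIndex ∧ IsMulCommutative N ∧ IsMulTorsionFree N := by
  have := CommGroup.finite_torsion_of_fg A
  set k := Nat.card (CommGroup.torsion A)
  have hk : k ≠ 0 := Nat.card_pos.ne'
  -- `k` kills the torsion of `A`, so `D` is torsion-free.
  let D := (powMonoidHom k : A →* A).range.map A.subtype
  have hD : D.FiniteIndex := ⟨by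
    rw [index_map_subtype]
    exact mul_ne_zero (finiteIndex_range_powMonoidHom_of_fg A hk).index_ne_zero
      FiniteIndex.index_ne_zero⟩
  have hNA : D.normalCore ≤ A := (normalCore_le D).trans (map_subtype_le _)
  have : IsMulCommutative D.normalCore := .of_comm fun a b ↦
    Subtype.ext (setLike_mul_comm (s := A) (hNA a.2) (hNA b.2))
  refine ⟨D.normalCore, inferInstance, inferInstance, this,
    IsMulTorsionFree.of_not_isOfFinOrder fun x hx hfin ↦ hx ?_⟩
  obtain ⟨_, ⟨a, rfl⟩, hxa⟩ := normalCore_le D x.2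
  have hxfin : IsOfFinOrder (x : X) := Submonoid.isOfFinOrder_coe.mpr hfin
  rw [← hxa] at hxfin
  have ha : IsOfFinOrder a := (Submonoid.isOfFinOrder_coe.mp hxfin).of_pow hk
  have : a ^ k = 1 :=
    congrArg Subtype.val (pow_card_eq_one' (G := CommGroup.torsion A) (x := ⟨a, ha⟩))
  ext
  simp [← hxa, this]

theorem finite_range_conjNormal (T : Subgroup X) [T.Normal] [T.FiniteIndex] [IsMulCommutative T] :
    Finite (MulAut.conjNormal : X →* MulAut T).range := by
  have hT : T ≤ (MulAut.conjNormal : X →* MulAut T).ker := fun t ht ↦ by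
    ext x
    simp [MulAut.conjNormal_apply, setLike_mul_comm (s := T) ht x.2]
  have := finiteIndex_of_le hT
  exact Finite.of_equiv _ (QuotientGroup.quotientKerEquivRange _).toEquiv

open scoped IsMulCommutative in
theorem exists_disjoint_sup_finiteIndex [Group.FG X] (A : Subgroup X) [A.FiniteIndex]
    [IsMulCommutative A] {P N : Subgroup X} (hPN : P ≤ normalizer N) :
    ∃ C : Subgroup X, P ≤ normalizer C ∧ Disjoint C N ∧ (C ⊔ N).FiniteIndex := by
  obtain ⟨T, hT, hTfi, hTcomm, hTtf⟩ := A.exists_normal_torsionFree_of_isMulCommutative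
  let Γ : Subgroup (MulAut T) := P.map MulAut.conjNormal
  have : Finite (MulAut.conjNormal : X →* MulAut T).range := finite_range_conjNormal T
  have : Finite Γ := Finite.of_injective _ (inclusion_injective (map_le_range _ P))
  rw [le_normalizer_iff] at hPN
  obtain ⟨C, hCΓ, hCB, hCBfi⟩ := exists_invariant_complement Γ (N.subgroupOf T) <| by
    rintro _ ⟨p, hp, rfl⟩ b hb
    simpa [mem_subgroupOf, MulAut.conjNormal_apply] using hPN p hp _ hb
  refine ⟨C.map T.subtype, le_normalizer_iff.mpr ?_, disjoint_def.mpr ?_, ?_⟩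
  · rintro p hp _ ⟨c, hc, rfl⟩
    exact ⟨_, hCΓ _ ⟨p, hp, rfl⟩ c hc, by simp [MulAut.conjNormal_apply]⟩
  · rintro _ ⟨c, hc, rfl⟩ hcN
    simpa using disjoint_def.mp hCB hc (mem_subgroupOf.mpr hcN)
  · have : ((C ⊔ N.subgroupOf T).map T.subtype).FiniteIndex := ⟨by
      rw [index_map_subtype]
      exact mul_ne_zero hCBfi.index_ne_zero hTfi.index_ne_zero⟩
    refine finiteIndex_of_le (H := (C ⊔ N.subgroupOf T).map T.subtype) ?_
    rw [map_sup, subgroupOf_map_subtype]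
    exact sup_le_sup_left inf_le_left _

variable {G : Type*} [Group G]

theorem exists_retraction_sup_of_le_normalizer {C H : Subgroup G} (hH : H ≤ normalizer C)
    (hCH : Disjoint C H) :
    ∃ ρ : ↥(H ⊔ C) →* G, (∀ k, ρ k ∈ H) ∧ ∀ k : ↥(H ⊔ C), (k : G) ∈ H → ρ k = k := by
  have := normal_subgroupOf_sup_of_le_normalizer hH
  let φ : H →* ↥(H ⊔ C) ⧸ C.subgroupOf (H ⊔ C) :=
    (QuotientGroup.mk' _).comp (inclusion le_sup_left)
  have hφ : Function.Bijective φ := by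
    refine ⟨(injective_iff_map_eq_one φ).mpr fun h hh ↦ ?_, fun q ↦ ?_⟩
    · have hC : (h : G) ∈ C := by simpa [φ, mem_subgroupOf] using hh
      exact Subtype.ext (disjoint_def.mp hCH hC h.2)
    · obtain ⟨⟨k, hk⟩, rfl⟩ := QuotientGroup.mk'_surjective _ q
      rw [← SetLike.mem_coe, coe_mul_of_left_le_normalizer_right H C hH] at hk
      obtain ⟨h, hh, c, hc, rfl⟩ := hk
      refine ⟨⟨h, hh⟩, QuotientGroup.eq.mpr ?_⟩
      simpa [mem_subgroupOf] using hc
  let e := MulEquiv.ofBijective φ hφ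
  refine ⟨H.subtype.comp (e.symm.toMonoidHom.comp (QuotientGroup.mk' _)), fun k ↦ (e.symm _).2,
    fun k hk ↦ ?_⟩
  have : QuotientGroup.mk' (C.subgroupOf (H ⊔ C)) k = e ⟨k, hk⟩ := rfl
  change ((e.symm (QuotientGroup.mk' _ k) : H) : G) = k
  rw [this, e.symm_apply_apply]

theorem relIndex_sup_ne_zero_of_normal {H N : Subgroup G} [N.Normal] (h : H.relIndex N ≠ 0) :
    H.relIndex (N ⊔ H) ≠ 0 := by
  have : Finite (N ⧸ H.subgroupOf N) := index_ne_zero_iff_finite.mp h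
  let f : N ⧸ H.subgroupOf N → ↥(N ⊔ H) ⧸ H.subgroupOf (N ⊔ H) :=
    Quotient.map' (inclusion le_sup_left) fun a b hab ↦ by
      rw [QuotientGroup.leftRel_apply] at hab ⊢
      simpa [mem_subgroupOf] using hab
  have hf : Function.Surjective f := by
    rintro ⟨⟨k, hk⟩⟩
    rw [← SetLike.mem_coe, normal_mul] at hk
    obtain ⟨n, hn, h, hh, rfl⟩ := hk
    refine ⟨QuotientGroup.mk ⟨n, hn⟩, Quotient.sound' ?_⟩
    rw [QuotientGroup.leftRel_apply]
    simpa [mem_subgroupOf] using hh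
  have := Finite.of_surjective f hf
  exact index_ne_zero_of_finite

theorem FG.map {G' : Type*} [Group G'] {H : Subgroup G} (hH : H.FG) (f : G →* G') :
    (H.map f).FG := by
  classical
  obtain ⟨S, rfl⟩ := hH
  exact ⟨S.image f, by rw [Finset.coe_image, MonoidHom.map_closure]⟩

end Subgroup

section VirtualRetract

open Subgroup

theorem isVirtualRetract_top {G : Type*} [Group G] : IsVirtualRetract (⊤ : Subgroup G) :=
  ⟨⊤, inferInstance, le_rfl, (⊤ : Subgroup G).subtype, fun _ ↦ mem_top _, fun _ _ ↦ rfl⟩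

theorem IsVirtualRetract.prod {G₁ G₂ : Type*} [Group G₁] [Group G₂] {H₁ : Subgroup G₁}
    {H₂ : Subgroup G₂} (h₁ : IsVirtualRetract H₁) (h₂ : IsVirtualRetract H₂) :
    IsVirtualRetract (H₁.prod H₂) := by
  obtain ⟨K₁, hK₁, hHK₁, ρ₁, hρ₁H, hρ₁⟩ := h₁
  obtain ⟨K₂, hK₂, hHK₂, ρ₂, hρ₂H, hρ₂⟩ := h₂
  refine ⟨K₁.prod K₂, ⟨by simp [index_prod, hK₁.index_ne_zero, hK₂.index_ne_zero]⟩,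
    prod_mono hHK₁ hHK₂, (ρ₁.prodMap ρ₂).comp (K₁.prodEquiv K₂).toMonoidHom,
    fun k ↦ mem_prod.mpr ⟨hρ₁H _, hρ₂H _⟩, fun k hk ↦ ?_⟩
  rw [mem_prod] at hk
  exact Prod.ext (hρ₁ ⟨_, (mem_prod.mp k.2).1⟩ hk.1) (hρ₂ ⟨_, (mem_prod.mp k.2).2⟩ hk.2)

theorem IsVirtualRetract.trans {G : Type*} [Group G] {H M K : Subgroup G}
    (hM : IsVirtualRetract M) (hHM : H ≤ M) (hHK : H ≤ K) (hK : K.relIndex M ≠ 0)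
    (ρ : K →* G) (hρH : ∀ k, ρ k ∈ H) (hρ : ∀ k : K, (k : G) ∈ H → ρ k = k) :
    IsVirtualRetract H := by
  obtain ⟨L, hL, hML, σ, hσM, hσ⟩ := hM
  have hσrange : σ.range = M :=
    le_antisymm (fun _ ⟨l, hl⟩ ↦ hl ▸ hσM l) fun m hm ↦ ⟨⟨m, hML hm⟩, hσ _ hm⟩
  have hle : (K.comap σ).map L.subtype ≤ L := map_subtype_le _
  have hσK : ∀ k : ↥((K.comap σ).map L.subtype), σ (inclusion hle k) ∈ K := by
    rintro ⟨_, l, hl, rfl⟩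
    exact hl
  refine ⟨(K.comap σ).map L.subtype, ⟨?_⟩, fun h hh ↦ ⟨⟨h, hML (hHM hh)⟩, ?_, rfl⟩,
    ρ.comp ((σ.comp (inclusion hle)).codRestrict K hσK), fun k ↦ hρH _, fun k hk ↦ ?_⟩
  · rw [index_map_subtype, index_comap, hσrange]
    exact mul_ne_zero hK hL.index_ne_zero
  · show σ _ ∈ K
    rw [hσ ⟨h, hML (hHM hh)⟩ (hHM hh)]
    exact hHK hh
  · have : σ (inclusion hle k) = k := hσ _ (hHM hk)
    simpa [this] using hρ ⟨k, this ▸ hσK k⟩ hk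

end VirtualRetract

namespace Subgroup

variable {X Y : Type*} [Group X] [Group Y] (H : Subgroup (X × Y))

theorem map_fst_le_normalizer_comap_inl :
    H.map (MonoidHom.fst X Y) ≤ normalizer (H.comap (MonoidHom.inl X Y)) := by
  rw [le_normalizer_iff]
  rintro _ ⟨h, hh, rfl⟩ n hn
  show MonoidHom.inl X Y _ ∈ H
  convert H.mul_mem (H.mul_mem hh hn) (H.inv_mem hh) using 1
  ext <;> simp

variable {H} {C : Subgroup X}

theorem le_normalizer_map_inl (hC : H.map (MonoidHom.fst X Y) ≤ normalizer C) :
    H ≤ normalizer (C.map (MonoidHom.inl X Y)) := by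
  rw [le_normalizer_iff] at hC ⊢
  rintro h hh _ ⟨c, hc, rfl⟩
  exact ⟨_, hC _ ⟨h, hh, rfl⟩ c hc, by ext <;> simp⟩

theorem disjoint_map_inl (hC : Disjoint C (H.comap (MonoidHom.inl X Y))) :
    Disjoint (C.map (MonoidHom.inl X Y)) H := by
  rw [disjoint_def] at hC ⊢
  rintro _ ⟨c, hc, rfl⟩ hcH
  simp [hC hc hcH]

theorem relIndex_sup_map_inl_ne_zero (hC : (C ⊔ H.comap (MonoidHom.inl X Y)).FiniteIndex) :
    (H ⊔ C.map (MonoidHom.inl X Y)).relIndex ((⊤ : Subgroup X).prod (H.map (MonoidHom.snd X Y)))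
      ≠ 0 := by
  set K := H ⊔ C.map (MonoidHom.inl X Y)
  have hKinl : K.relIndex (MonoidHom.snd X Y).ker ≠ 0 := by
    have hker : (MonoidHom.snd X Y).ker = (MonoidHom.inl X Y).range := by
      ext ⟨x, y⟩
      simp [mem_prod, eq_comm]
    rw [hker, ← index_comap]
    have hle : C ⊔ H.comap (MonoidHom.inl X Y) ≤ K.comap (MonoidHom.inl X Y) :=
      sup_le (map_le_iff_le_comap.mp le_sup_right) (comap_mono le_sup_left)
    exact (finiteIndex_of_le hle).index_ne_zero
  refine fun h0 ↦ relIndex_sup_ne_zero_of_normal hKinl (relIndex_eq_zero_of_le_right ?_ h0)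
  rintro ⟨x, _⟩ ⟨-, h, hh, rfl⟩
  have : (x, MonoidHom.snd X Y h) = (x * h.1⁻¹, 1) * h := by ext <;> simp
  rw [this]
  exact mul_mem_sup (by simp [mem_prod]) (le_sup_left (b := C.map _) hh)

end Subgroup

theorem lr_prod_of_virtually_abelian {X Y : Type*} [Group X] [Group Y]
    [Group.FG X] (A : Subgroup X) (hA : A.FiniteIndex)
    (hab : ∀ a b : A, a * b = b * a) (hY : HasLR Y) : HasLR (X × Y) := by
  have : IsMulCommutative A := .of_comm hab
  intro H hH
  have hHM : H ≤ (⊤ : Subgroup X).prod (H.map (MonoidHom.snd X Y)) :=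
    fun h hh ↦ Subgroup.mem_prod.mpr ⟨Subgroup.mem_top _, h, hh, rfl⟩
  obtain ⟨C, hCP, hCN, hCfi⟩ := A.exists_disjoint_sup_finiteIndex H.map_fst_le_normalizer_comap_inl
  obtain ⟨ρ, hρH, hρ⟩ :=
    Subgroup.exists_retraction_sup_of_le_normalizer (Subgroup.le_normalizer_map_inl hCP)
      (Subgroup.disjoint_map_inl hCN)
  exact (isVirtualRetract_top.prod (hY _ (hH.map _))).trans hHM le_sup_left
    (Subgroup.relIndex_sup_map_inl_ne_zero hCfi) ρ hρH hρ
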